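/- (Change-of-variables representation of the partial outer bound.) For every α > 0, the following two sets of pairs (R_p, R_c) coincide: (i) the set of pairs with R_p ≥ 0, R_c ≥ 0 for which there exist PSD matrices Q_p ((n_pt+n_ct)×(n_pt+n_ct)) and Σ_cc (n_ct×n_ct) with Tr(Q_p)+Tr(Σ_cc) ≤ P_p + α·P_c, R_p ≤ logdet(I + G_α Q_p G_α† + (1/α) H_cp Σ_cc H_cp†) − logdet(I + (1/α) H_cp Σ_cc H_cp†), and R_c ≤ logdet(I + (1/α) H_cc Σ_cc H_cc†); and (ii) the set of pairs with R_p ≥ 0, R_c ≥ 0 for which there exist PSD matrices Σ_p (n_pt×n_pt), Σ_cp, Σ_cc (n_ct×n_ct) and a complex n_pt×n_ct matrix Q such that Σ_pnet = [[Σ_p, Q],[Q†, Σ_cp]] is PSD, Tr(Σ_p) + α·Tr(Σ_cp) + α·Tr(Σ_cc) ≤ P_p + α·P_c, R_p ≤ logdet(I + G Σ_pnet G† + H_cp Σ_cc H_cp†) − logdet(I + H_cp Σ_cc H_cp†), and R_c ≤ logdet(I + H_cc Σ_cc H_cc†). -/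

import Mathlib

open Matrix Filter
open scoped ComplexOrder

noncomputable section

/-- `Mat m n` : complex `m × n` matrix. -/
abbrev Mat (m n : ℕ) := Matrix (Fin m) (Fin n) ℂ

/-- `LD M = log det (I + M)` (real part of the determinant). -/
def LD {ι : Type*} [Fintype ι] [DecidableEq ι] (M : Matrix ι ι ℂ) : ℝ :=
  Real.log ((1 + M).det.re)

/-- real trace. -/
def rTr {ι : Type*} [Fintype ι] (M : Matrix ι ι ℂ) : ℝ := M.trace.re

/-- `G = [H_pp  H_cp]`. -/
def Gmat {npt nct npr : ℕ} (Hpp : Mat npr npt) (Hcp : Mat npr nct) :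
    Matrix (Fin npr) (Fin npt ⊕ Fin nct) ℂ :=
  fromCols Hpp Hcp

/-- `G_α = [H_pp  H_cp/√α]`. -/
def Galpha {npt nct npr : ℕ} (Hpp : Mat npr npt) (Hcp : Mat npr nct) (α : ℝ) :
    Matrix (Fin npr) (Fin npt ⊕ Fin nct) ℂ :=
  fromCols Hpp (((Real.sqrt α : ℂ))⁻¹ • Hcp)

/-- The achievable region `R_in`. -/
def Rin {npt nct npr ncr : ℕ} (Hpp : Mat npr npt) (Hcp : Mat npr nct) (Hcc : Mat ncr nct)
    (Pp Pc : ℝ) : Set (ℝ × ℝ) :=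
  closure (convexHull ℝ
    {R : ℝ × ℝ | 0 ≤ R.1 ∧ 0 ≤ R.2 ∧
      ∃ (Sp : Mat npt npt) (Scp Scc : Mat nct nct) (Q : Mat npt nct),
        Sp.PosSemidef ∧ Scp.PosSemidef ∧ Scc.PosSemidef ∧
        (fromBlocks Sp Q Qᴴ Scp).PosSemidef ∧
        rTr Sp ≤ Pp ∧ rTr Scp + rTr Scc ≤ Pc ∧
        R.1 ≤ LD (Gmat Hpp Hcp * fromBlocks Sp Q Qᴴ Scp * (Gmat Hpp Hcp)ᴴ
                  + Hcp * Scc * Hcpᴴ)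
              - LD (Hcp * Scc * Hcpᴴ) ∧
        R.2 ≤ LD (Hcc * Scc * Hccᴴ)})

/-- The partial outer bound region `R_part,out^α`. -/
def Rpart {npt nct npr ncr : ℕ} (Hpp : Mat npr npt) (Hcp : Mat npr nct) (Hcc : Mat ncr nct)
    (Pp Pc : ℝ) (α : ℝ) : Set (ℝ × ℝ) :=
  closure (convexHull ℝ
    {R : ℝ × ℝ | 0 ≤ R.1 ∧ 0 ≤ R.2 ∧
      ∃ (Qp : Matrix (Fin npt ⊕ Fin nct) (Fin npt ⊕ Fin nct) ℂ) (Scc : Mat nct nct),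
        Qp.PosSemidef ∧ Scc.PosSemidef ∧
        rTr Qp + rTr Scc ≤ Pp + α * Pc ∧
        R.1 ≤ LD (Galpha Hpp Hcp α * Qp * (Galpha Hpp Hcp α)ᴴ
                  + ((α : ℂ))⁻¹ • (Hcp * Scc * Hcpᴴ))
              - LD (((α : ℂ))⁻¹ • (Hcp * Scc * Hcpᴴ)) ∧
        R.2 ≤ LD (((α : ℂ))⁻¹ • (Hcc * Scc * Hccᴴ))})

/-- Tuples in `R_ach,rate` (no power constraints). -/
def RachRate {npt nct npr ncr : ℕ} (Hpp : Mat npr npt) (Hcp : Mat npr nct) (Hcc : Mat ncr nct)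
    (Rp Rc : ℝ) (Sp : Mat npt npt) (Scp Scc : Mat nct nct) (Q : Mat npt nct) : Prop :=
  0 ≤ Rp ∧ 0 ≤ Rc ∧ Sp.PosSemidef ∧ Scp.PosSemidef ∧ Scc.PosSemidef ∧
  (fromBlocks Sp Q Qᴴ Scp).PosSemidef ∧
  Rp ≤ LD (Gmat Hpp Hcp * fromBlocks Sp Q Qᴴ Scp * (Gmat Hpp Hcp)ᴴ + Hcp * Scc * Hcpᴴ)
        - LD (Hcp * Scc * Hcpᴴ) ∧
  Rc ≤ LD (Hcc * Scc * Hccᴴ)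

/-- The Lagrangian `L`. -/
def Lfun {npt nct : ℕ} (Pp Pc μ Rp Rc : ℝ) (Sp : Mat npt npt) (Scp Scc : Mat nct nct)
    (l1 l2 : ℝ) : ℝ :=
  μ * Rp + Rc - l1 * (rTr Sp - Pp) - l2 * (rTr Scp + rTr Scc - Pc)

/-- The Lagrangian `L₁`. -/
def L1fun {npt nct : ℕ} (Pp Pc μ Rp Rc : ℝ) (Sp : Mat npt npt) (Scp Scc : Mat nct nct)
    (l α : ℝ) : ℝ :=
  μ * Rp + Rc - l * (rTr Sp + α * rTr Scp + α * rTr Scc - Pp - α * Pc)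

/-- `K = [0  H_cc/√α]`. -/
def Kmat (npt : ℕ) {nct ncr : ℕ} (Hcc : Mat ncr nct) (α : ℝ) :
    Matrix (Fin ncr) (Fin npt ⊕ Fin nct) ℂ :=
  fromCols 0 (((Real.sqrt α : ℂ))⁻¹ • Hcc)

/-- `K̄ = [[H_pp, H_cp/√α],[0, H_cc/√α]]`. -/
def Kbar {npt nct npr ncr : ℕ} (Hpp : Mat npr npt) (Hcp : Mat npr nct) (Hcc : Mat ncr nct)
    (α : ℝ) : Matrix (Fin npr ⊕ Fin ncr) (Fin npt ⊕ Fin nct) ℂ :=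
  fromBlocks Hpp (((Real.sqrt α : ℂ))⁻¹ • Hcp) 0 (((Real.sqrt α : ℂ))⁻¹ • Hcc)

/-- The region `R₁^α` (licensed user encoded first). -/
def R1reg {npt nct npr ncr : ℕ} (Hpp : Mat npr npt) (Hcp : Mat npr nct) (Hcc : Mat ncr nct)
    (Pp Pc : ℝ) (α : ℝ) : Set (ℝ × ℝ) :=
  closure (convexHull ℝ
    {R : ℝ × ℝ | 0 ≤ R.1 ∧ 0 ≤ R.2 ∧
      ∃ Qp Qc : Matrix (Fin npt ⊕ Fin nct) (Fin npt ⊕ Fin nct) ℂ,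
        Qp.PosSemidef ∧ Qc.PosSemidef ∧ rTr Qp + rTr Qc ≤ Pp + α * Pc ∧
        R.1 ≤ LD (Galpha Hpp Hcp α * Qp * (Galpha Hpp Hcp α)ᴴ
                  + Galpha Hpp Hcp α * Qc * (Galpha Hpp Hcp α)ᴴ)
              - LD (Galpha Hpp Hcp α * Qc * (Galpha Hpp Hcp α)ᴴ) ∧
        R.2 ≤ LD (Kmat npt Hcc α * Qc * (Kmat npt Hcc α)ᴴ)})

/-- The region `R₂^α` (cognitive user encoded first). -/
def R2reg {npt nct npr ncr : ℕ} (Hpp : Mat npr npt) (Hcp : Mat npr nct) (Hcc : Mat ncr nct)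
    (Pp Pc : ℝ) (α : ℝ) : Set (ℝ × ℝ) :=
  closure (convexHull ℝ
    {R : ℝ × ℝ | 0 ≤ R.1 ∧ 0 ≤ R.2 ∧
      ∃ Qp Qc : Matrix (Fin npt ⊕ Fin nct) (Fin npt ⊕ Fin nct) ℂ,
        Qp.PosSemidef ∧ Qc.PosSemidef ∧ rTr Qp + rTr Qc ≤ Pp + α * Pc ∧
        R.1 ≤ LD (Galpha Hpp Hcp α * Qp * (Galpha Hpp Hcp α)ᴴ) ∧
        R.2 ≤ LD (Kmat npt Hcc α * Qp * (Kmat npt Hcc α)ᴴ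
                  + Kmat npt Hcc α * Qc * (Kmat npt Hcc α)ᴴ)
              - LD (Kmat npt Hcc α * Qp * (Kmat npt Hcc α)ᴴ)})

/-- The dirty-paper-coding region `D^α`. -/
def Dreg {npt nct npr ncr : ℕ} (Hpp : Mat npr npt) (Hcp : Mat npr nct) (Hcc : Mat ncr nct)
    (Pp Pc : ℝ) (α : ℝ) : Set (ℝ × ℝ) :=
  closure (convexHull ℝ
    (R1reg Hpp Hcp Hcc Pp Pc α ∪ R2reg Hpp Hcp Hcc Pp Pc α))

/-- `Σ_z = [[I, Q_z],[Q_z†, I]]`. -/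
def Sigmaz {npr ncr : ℕ} (Qz : Mat npr ncr) :
    Matrix (Fin npr ⊕ Fin ncr) (Fin npr ⊕ Fin ncr) ℂ :=
  fromBlocks 1 Qz Qzᴴ 1

/-- The outer bound region `R_out^{α,Σ_z}`. -/
def Rout {npt nct npr ncr : ℕ} (Hpp : Mat npr npt) (Hcp : Mat npr nct) (Hcc : Mat ncr nct)
    (Pp Pc : ℝ) (α : ℝ) (Qz : Mat npr ncr) : Set (ℝ × ℝ) :=
  closure (convexHull ℝ
    {R : ℝ × ℝ | 0 ≤ R.1 ∧ 0 ≤ R.2 ∧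
      ∃ Qp Qc : Matrix (Fin npt ⊕ Fin nct) (Fin npt ⊕ Fin nct) ℂ,
        Qp.PosSemidef ∧ Qc.PosSemidef ∧ rTr Qp + rTr Qc ≤ Pp + α * Pc ∧
        R.1 ≤ LD (Galpha Hpp Hcp α * Qp * (Galpha Hpp Hcp α)ᴴ
                  + Galpha Hpp Hcp α * Qc * (Galpha Hpp Hcp α)ᴴ)
              - LD (Galpha Hpp Hcp α * Qc * (Galpha Hpp Hcp α)ᴴ) ∧
        R.2 ≤ Real.log ((Sigmaz Qz + Kbar Hpp Hcp Hcc α * Qc * (Kbar Hpp Hcp Hcc α)ᴴ).det.re)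
              - Real.log ((Sigmaz Qz).det.re)})

/-!
With `s = √α` and `D_s = diag(I, s I)` one has `G_α = G D_s⁻¹`. Hence the substitution
`Q_p = D_s Σ_pnet D_s`, `Σ_cc ↦ α Σ_cc` carries `G Σ_pnet G†` to `G_α Q_p G_α†` and
`Tr Σ_p + α Tr Σ_cp + α Tr Σ_cc` to `Tr Q_p + Tr Σ_cc`, leaves every rate expression unchanged,
and is a bijection between the positive semidefinite parameters of the two sets.
-/

namespace Matrix

section Blocks

variable {m n R : Type*}

theorem trace_fromBlocks [Fintype m] [Fintype n] [AddCommMonoid R] (A : Matrix m m R)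
    (B : Matrix m n R) (C : Matrix n m R) (D : Matrix n n R) :
    (fromBlocks A B C D).trace = A.trace + D.trace := by
  simp [trace, Fintype.sum_sum_type]

theorem IsHermitian.fromBlocks_toBlocks [Star R] {M : Matrix (m ⊕ n) (m ⊕ n) R}
    (hM : M.IsHermitian) :
    Matrix.fromBlocks M.toBlocks₁₁ M.toBlocks₁₂ M.toBlocks₁₂ᴴ M.toBlocks₂₂ = M := by
  ext (i | i) (j | j)
  · rfl
  · rfl
  · exact hM.apply (.inr i) (.inl j)
  · rfl

theorem PosSemidef.toBlocks₁₁ [CommRing R] [PartialOrder R] [StarRing R]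
    {M : Matrix (m ⊕ n) (m ⊕ n) R} (hM : M.PosSemidef) : M.toBlocks₁₁.PosSemidef :=
  hM.submatrix Sum.inl

theorem PosSemidef.toBlocks₂₂ [CommRing R] [PartialOrder R] [StarRing R]
    {M : Matrix (m ⊕ n) (m ⊕ n) R} (hM : M.PosSemidef) : M.toBlocks₂₂.PosSemidef :=
  hM.submatrix Sum.inr

end Blocks

def blockScale (m n : Type*) [DecidableEq m] [DecidableEq n] (c : ℂ) :
    Matrix (m ⊕ n) (m ⊕ n) ℂ := fromBlocks 1 0 0 (c • 1)

section BlockScale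

variable {l m n : Type*} [DecidableEq m] [DecidableEq n]

theorem blockScale_mul_blockScale [Fintype m] [Fintype n] (a b : ℂ) :
    blockScale m n a * blockScale m n b = blockScale m n (a * b) := by
  simp [blockScale, fromBlocks_multiply, smul_smul, mul_comm]

theorem blockScale_one : blockScale m n 1 = 1 := by
  simp [blockScale, fromBlocks_one]

theorem conjTranspose_blockScale (c : ℂ) : (blockScale m n c)ᴴ = blockScale m n (star c) := by
  simp [blockScale, fromBlocks_conjTranspose]

theorem blockScale_mul_blockScale_conj_mul_blockScale [Fintype m] [Fintype n] (a b : ℂ)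
    (M : Matrix (m ⊕ n) (m ⊕ n) ℂ) :
    blockScale m n a * (blockScale m n b * M * blockScale m n b) * blockScale m n a
      = blockScale m n (a * b) * M * blockScale m n (a * b) := by
  calc _ = blockScale m n a * blockScale m n b * M * (blockScale m n b * blockScale m n a) := by
        simp only [Matrix.mul_assoc]
    _ = _ := by rw [blockScale_mul_blockScale, blockScale_mul_blockScale, mul_comm b]

theorem blockScale_inv_conj_blockScale_conj [Fintype m] [Fintype n] {c : ℂ} (hc : c ≠ 0)
    (M : Matrix (m ⊕ n) (m ⊕ n) ℂ) :
    blockScale m n c⁻¹ * (blockScale m n c * M * blockScale m n c) * blockScale m n c⁻¹ = M := by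
  rw [blockScale_mul_blockScale_conj_mul_blockScale, inv_mul_cancel₀ hc, blockScale_one,
    Matrix.one_mul, Matrix.mul_one]

theorem fromCols_mul_blockScale [Fintype m] [Fintype n] (A : Matrix l m ℂ) (B : Matrix l n ℂ)
    (c : ℂ) : fromCols A B * blockScale m n c = fromCols A (c • B) := by
  rw [blockScale, fromCols_mul_fromBlocks]
  simp

theorem blockScale_mul_fromBlocks_mul_blockScale [Fintype m] [Fintype n] (c : ℂ)
    (A : Matrix m m ℂ) (B : Matrix m n ℂ) (C : Matrix n m ℂ) (D : Matrix n n ℂ) :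
    blockScale m n c * fromBlocks A B C D * blockScale m n c
      = fromBlocks A (c • B) (c • C) ((c * c) • D) := by
  simp [blockScale, fromBlocks_multiply, smul_smul]

theorem PosSemidef.blockScale_conj [Fintype m] [Fintype n] {M : Matrix (m ⊕ n) (m ⊕ n) ℂ}
    (hM : M.PosSemidef) (s : ℝ) :
    (blockScale m n (s : ℂ) * M * blockScale m n (s : ℂ)).PosSemidef := by
  simpa [conjTranspose_blockScale] using hM.mul_mul_conjTranspose_same (blockScale m n (s : ℂ))

theorem PosSemidef.exists_eq_blockScale_conj_fromBlocks [Fintype m] [Fintype n]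
    {M : Matrix (m ⊕ n) (m ⊕ n) ℂ} (hM : M.PosSemidef) {s : ℝ} (hs : s ≠ 0) :
    ∃ (A : Matrix m m ℂ) (B : Matrix m n ℂ) (D : Matrix n n ℂ),
      (fromBlocks A B Bᴴ D).PosSemidef ∧
      M = blockScale m n (s : ℂ) * fromBlocks A B Bᴴ D * blockScale m n (s : ℂ) := by
  set N := blockScale m n (s : ℂ)⁻¹ * M * blockScale m n (s : ℂ)⁻¹
  have hN : N.PosSemidef := by simpa using hM.blockScale_conj s⁻¹
  have hMN := blockScale_inv_conj_blockScale_conj (inv_ne_zero (Complex.ofReal_ne_zero.mpr hs)) M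
  rw [inv_inv] at hMN
  refine ⟨N.toBlocks₁₁, N.toBlocks₁₂, N.toBlocks₂₂, ?_, ?_⟩ <;>
    rw [hN.isHermitian.fromBlocks_toBlocks]
  exacts [hN, hMN.symm]

end BlockScale

end Matrix

open Matrix

theorem rTr_ofReal_smul {ι : Type*} [Fintype ι] (r : ℝ) (M : Matrix ι ι ℂ) :
    rTr ((r : ℂ) • M) = r * rTr M := by
  simp [rTr, trace_smul]

theorem rTr_blockScale_mul_fromBlocks_mul_blockScale {m n : Type*} [Fintype m] [Fintype n]
    [DecidableEq m] [DecidableEq n] (s : ℝ) (A : Matrix m m ℂ) (B : Matrix m n ℂ)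
    (C : Matrix n m ℂ) (D : Matrix n n ℂ) :
    rTr (blockScale m n (s : ℂ) * fromBlocks A B C D * blockScale m n (s : ℂ))
      = rTr A + s ^ 2 * rTr D := by
  rw [blockScale_mul_fromBlocks_mul_blockScale, rTr, trace_fromBlocks, Complex.add_re,
    ← Complex.ofReal_mul, ← rTr, ← rTr, rTr_ofReal_smul, sq]

theorem Galpha_mul_blockScale_conj {npt nct npr : ℕ} (Hpp : Mat npr npt) (Hcp : Mat npr nct)
    {α : ℝ} (hα : 0 < α) (M : Matrix (Fin npt ⊕ Fin nct) (Fin npt ⊕ Fin nct) ℂ) :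
    Galpha Hpp Hcp α
        * (blockScale (Fin npt) (Fin nct) (√α : ℂ) * M * blockScale (Fin npt) (Fin nct) (√α : ℂ))
        * (Galpha Hpp Hcp α)ᴴ
      = Gmat Hpp Hcp * M * (Gmat Hpp Hcp)ᴴ := by
  have hG : Galpha Hpp Hcp α = Gmat Hpp Hcp * blockScale (Fin npt) (Fin nct) (√α : ℂ)⁻¹ := by
    rw [Gmat, fromCols_mul_blockScale, Galpha]
  have hsqrt : (√α : ℂ) ≠ 0 := Complex.ofReal_ne_zero.mpr (Real.sqrt_pos.mpr hα).ne'
  rw [hG, Matrix.conjTranspose_mul, conjTranspose_blockScale, star_inv₀, Complex.star_def,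
    Complex.conj_ofReal]
  conv_rhs => rw [← blockScale_inv_conj_blockScale_conj hsqrt M]
  simp only [Matrix.mul_assoc]

theorem statement2_general {npt nct npr ncr : ℕ}
    (Hpp : Mat npr npt) (Hcp : Mat npr nct) (Hcc : Mat ncr nct)
    (Pp Pc : ℝ) (α : ℝ) (hα : 0 < α) :
    {R : ℝ × ℝ | 0 ≤ R.1 ∧ 0 ≤ R.2 ∧
      ∃ (Qp : Matrix (Fin npt ⊕ Fin nct) (Fin npt ⊕ Fin nct) ℂ) (Scc : Mat nct nct),
        Qp.PosSemidef ∧ Scc.PosSemidef ∧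
        rTr Qp + rTr Scc ≤ Pp + α * Pc ∧
        R.1 ≤ LD (Galpha Hpp Hcp α * Qp * (Galpha Hpp Hcp α)ᴴ
                  + ((α : ℂ))⁻¹ • (Hcp * Scc * Hcpᴴ))
              - LD (((α : ℂ))⁻¹ • (Hcp * Scc * Hcpᴴ)) ∧
        R.2 ≤ LD (((α : ℂ))⁻¹ • (Hcc * Scc * Hccᴴ))} =
    {R : ℝ × ℝ | 0 ≤ R.1 ∧ 0 ≤ R.2 ∧
      ∃ (Sp : Mat npt npt) (Scp Scc : Mat nct nct) (Q : Mat npt nct),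
        Sp.PosSemidef ∧ Scp.PosSemidef ∧ Scc.PosSemidef ∧
        (fromBlocks Sp Q Qᴴ Scp).PosSemidef ∧
        rTr Sp + α * rTr Scp + α * rTr Scc ≤ Pp + α * Pc ∧
        R.1 ≤ LD (Gmat Hpp Hcp * fromBlocks Sp Q Qᴴ Scp * (Gmat Hpp Hcp)ᴴ
                  + Hcp * Scc * Hcpᴴ)
              - LD (Hcp * Scc * Hcpᴴ) ∧
        R.2 ≤ LD (Hcc * Scc * Hccᴴ)} := by
  have hsqrt : √α ≠ 0 := (Real.sqrt_pos.mpr hα).ne'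
  have hαC : (α : ℂ) ≠ 0 := Complex.ofReal_ne_zero.mpr hα.ne'
  ext R
  refine and_congr_right fun _ => and_congr_right fun _ => ⟨?_, ?_⟩
  · rintro ⟨Qp, Scc, hQp, hScc, htr, hRp, hRc⟩
    obtain ⟨Sp, Q, Scp, hS, rfl⟩ := hQp.exists_eq_blockScale_conj_fromBlocks hsqrt
    refine ⟨Sp, Scp, ((α⁻¹ : ℝ) : ℂ) • Scc, Q, hS.toBlocks₁₁, hS.toBlocks₂₂,
      hScc.smul (Complex.zero_le_real.mpr (inv_nonneg.mpr hα.le)), hS, ?_, ?_, ?_⟩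
    · rw [rTr_blockScale_mul_fromBlocks_mul_blockScale, Real.sq_sqrt hα.le] at htr
      rw [rTr_ofReal_smul, mul_inv_cancel_left₀ hα.ne']
      exact htr
    · rw [Galpha_mul_blockScale_conj _ _ hα] at hRp
      simpa only [Matrix.mul_smul, Matrix.smul_mul, Complex.ofReal_inv] using hRp
    · simpa only [Matrix.mul_smul, Matrix.smul_mul, Complex.ofReal_inv] using hRc
  · rintro ⟨Sp, Scp, Scc, Q, -, -, hScc, hS, htr, hRp, hRc⟩
    refine ⟨blockScale _ _ (√α : ℂ) * fromBlocks Sp Q Qᴴ Scp * blockScale _ _ (√α : ℂ),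
      (α : ℂ) • Scc, hS.blockScale_conj _, hScc.smul (Complex.zero_le_real.mpr hα.le),
      ?_, ?_, ?_⟩
    · rw [rTr_blockScale_mul_fromBlocks_mul_blockScale, Real.sq_sqrt hα.le, rTr_ofReal_smul]
      linarith
    · rw [Galpha_mul_blockScale_conj _ _ hα]
      simpa only [Matrix.mul_smul, Matrix.smul_mul, smul_smul, inv_mul_cancel₀ hαC, one_smul]
        using hRp
    · simpa only [Matrix.mul_smul, Matrix.smul_mul, smul_smul, inv_mul_cancel₀ hαC, one_smul]
        using hRc

theorem statement2 {npt nct npr ncr : ℕ}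
    (hnpt : 0 < npt) (hnct : 0 < nct) (hnpr : 0 < npr) (hncr : 0 < ncr)
    (Hpp : Mat npr npt) (Hcp : Mat npr nct) (Hcc : Mat ncr nct)
    (Pp Pc : ℝ) (hPp : 0 < Pp) (hPc : 0 < Pc) (α : ℝ) (hα : 0 < α) :
    {R : ℝ × ℝ | 0 ≤ R.1 ∧ 0 ≤ R.2 ∧
      ∃ (Qp : Matrix (Fin npt ⊕ Fin nct) (Fin npt ⊕ Fin nct) ℂ) (Scc : Mat nct nct),
        Qp.PosSemidef ∧ Scc.PosSemidef ∧
        rTr Qp + rTr Scc ≤ Pp + α * Pc ∧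
        R.1 ≤ LD (Galpha Hpp Hcp α * Qp * (Galpha Hpp Hcp α)ᴴ
                  + ((α : ℂ))⁻¹ • (Hcp * Scc * Hcpᴴ))
              - LD (((α : ℂ))⁻¹ • (Hcp * Scc * Hcpᴴ)) ∧
        R.2 ≤ LD (((α : ℂ))⁻¹ • (Hcc * Scc * Hccᴴ))} =
    {R : ℝ × ℝ | 0 ≤ R.1 ∧ 0 ≤ R.2 ∧
      ∃ (Sp : Mat npt npt) (Scp Scc : Mat nct nct) (Q : Mat npt nct),
        Sp.PosSemidef ∧ Scp.PosSemidef ∧ Scc.PosSemidef ∧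
        (fromBlocks Sp Q Qᴴ Scp).PosSemidef ∧
        rTr Sp + α * rTr Scp + α * rTr Scc ≤ Pp + α * Pc ∧
        R.1 ≤ LD (Gmat Hpp Hcp * fromBlocks Sp Q Qᴴ Scp * (Gmat Hpp Hcp)ᴴ
                  + Hcp * Scc * Hcpᴴ)
              - LD (Hcp * Scc * Hcpᴴ) ∧
        R.2 ≤ LD (Hcc * Scc * Hccᴴ)} :=
  statement2_general Hpp Hcp Hcc Pp Pc α hα

end
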